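/- Let G be a simple graph on a finite vertex type with G.IsSRGWith n k e d, and assume both G and Gᶜ are connected (G is a primitive strongly regular graph). Set α := ((e:ℝ) - (d:ℝ))^2 + 4*((k:ℝ) - (d:ℝ)). Then E(G) = E(Gᶜ) if and only if (n : ℝ) = 2*k*(Real.sqrt α + 1) / (Real.sqrt α - ((e:ℝ) - (d:ℝ))) + 1. -/

import Mathlib

/-! With `t = e - d`, the adjacency matrix `A` of an `srg(n, k, e, d)` satisfies
`A² = t A + (k - d) I + d J` and `A J = k J`, so `(A - k)(A - r)(A - s) = 0`, where
`r > 0 > s` are the roots of `x² - t x - (k - d)` (here `0 < d < k` by primitivity). Its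
eigenvalues therefore lie in `{k, r, s}`, and `tr A = 0`, `tr A² = n k` pin down the energy:
`E(G) (k - s)(r - s) = 2 n k (1 + r)(-s)`. The complement is an `srg` with the roots
`-1 - s ≥ 0 > -1 - r`, so `E(Gᶜ) (n - k + r)(r - s) = 2 n (n - k - 1)(1 + r)(-s)`, and
`E(G) = E(Gᶜ)` becomes `k (n - k + r) = (n - k - 1)(k - s)`, i.e. the formula for `n`,
since `r - s = √α` and `-2 s = √α - t`. -/

open Finset

/-- The adjacency matrix of a simple graph over `ℝ` is Hermitian. -/
lemma adjMatrix_isHermitian {V : Type*} [Fintype V] (G : SimpleGraph V) [DecidableRel G.Adj] :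
    (G.adjMatrix ℝ).IsHermitian := by
  rw [Matrix.IsHermitian, Matrix.conjTranspose_eq_transpose_of_trivial]
  exact G.isSymm_adjMatrix

/-- The eigenvalues (with multiplicity) of the real adjacency matrix of a simple graph. -/
noncomputable def adjEig {V : Type*} [Fintype V] [DecidableEq V] (G : SimpleGraph V) : V → ℝ := by
  classical
  exact (adjMatrix_isHermitian G).eigenvalues

/-- The energy of a graph : the sum of the absolute values of its adjacency eigenvalues. -/
noncomputable def energy {V : Type*} [Fintype V] [DecidableEq V] (G : SimpleGraph V) : ℝ :=
  ∑ i, |adjEig G i|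

/-- The characteristic polynomial of the real adjacency matrix of a simple graph. -/
noncomputable def charpolyOf {V : Type*} [Fintype V] [DecidableEq V] (G : SimpleGraph V) :
    Polynomial ℝ := by
  classical
  exact (G.adjMatrix ℝ).charpoly

open Polynomial

namespace Matrix.IsHermitian

variable {𝕜 n : Type*} [RCLike 𝕜] [Fintype n] [DecidableEq n] {A : Matrix n n 𝕜}

theorem trace_pow_eq_sum_eigenvalues_pow (hA : A.IsHermitian) (m : ℕ) :
    (A ^ m).trace = ∑ i, (hA.eigenvalues i : 𝕜) ^ m := by
  conv_lhs => rw [hA.spectral_theorem, ← map_pow, Unitary.conjStarAlgAut_apply, trace_mul_cycle,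
    Unitary.coe_star_mul_self, one_mul, diagonal_pow, trace_diagonal]
  simp

theorem eval_eigenvalues_eq_zero_of_aeval_eq_zero (hA : A.IsHermitian) {p : ℝ[X]}
    (hp : aeval A p = 0) (i : n) : p.eval (hA.eigenvalues i) = 0 := by
  have : Nonempty n := ⟨i⟩
  have hi : hA.eigenvalues i ∈ spectrum ℝ A := hA.spectrum_real_eq_range_eigenvalues ▸ ⟨i, rfl⟩
  simpa [hp, spectrum.zero_eq] using spectrum.subset_polynomial_aeval A p ⟨_, hi, rfl⟩

end Matrix.IsHermitian

theorem exists_pos_neg_roots (t : ℝ) {m : ℝ} (hm : 0 < m) :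
    ∃ r s : ℝ, r + s = t ∧ r * s = -m ∧ √(t ^ 2 + 4 * m) = r - s ∧ 0 < r ∧ s < 0 := by
  have hδ : √(t ^ 2 + 4 * m) ^ 2 = t ^ 2 + 4 * m := Real.sq_sqrt (by positivity)
  have ht : t < √(t ^ 2 + 4 * m) := Real.lt_sqrt_of_sq_lt (by linarith)
  have ht' : -t < √(t ^ 2 + 4 * m) := Real.lt_sqrt_of_sq_lt (by linarith)
  refine ⟨(t + √(t ^ 2 + 4 * m)) / 2, (t - √(t ^ 2 + 4 * m)) / 2, by ring,
    by linear_combination (-1 / 4 : ℝ) * hδ, by ring, by linarith, by linarith⟩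

namespace SimpleGraph

section Connectivity

variable {V : Type*} {G : SimpleGraph V}

theorem Connected.exists_adj_adj_not_adj_ne (hG : G.Connected) (hne : G ≠ ⊤) :
    ∃ x a b, G.Adj x a ∧ G.Adj a b ∧ ¬G.Adj x b ∧ x ≠ b := by
  obtain ⟨v, w, hvw, hna⟩ := ne_top_iff_exists_not_adj.1 hne
  obtain ⟨p, hp⟩ := hG.exists_walk_length_eq_dist v w
  exact p.exists_adj_adj_not_adj_ne hp (hG.one_lt_dist_of_ne_of_not_adj hvw hna)

theorem ne_top_of_connected_compl [Nontrivial V] (hGc : Gᶜ.Connected) : G ≠ ⊤ :=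
  fun hG ↦ not_connected_bot (by simpa [hG] using hGc)

end Connectivity

variable {V : Type*} [Fintype V] {G : SimpleGraph V} [DecidableRel G.Adj] {n k e d : ℕ}

theorem IsSRGWith.eq_top_of_connected (h : G.IsSRGWith n k e 0) (hG : G.Connected) : G = ⊤ := by
  by_contra hne
  obtain ⟨x, a, b, hxa, hab, hxb, hxb'⟩ := hG.exists_adj_adj_not_adj_ne hne
  have hcommon : a ∈ G.commonNeighbors x b := ⟨hxa, hab.symm⟩
  exact (Fintype.card_eq_zero_iff.1 (h.of_not_adj hxb' hxb)).false ⟨a, hcommon⟩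

theorem IsSRGWith.neighborFinset_eq_of_not_adj [DecidableEq V] (h : G.IsSRGWith n k e k)
    {v w : V} (hne : v ≠ w) (hna : ¬G.Adj v w) : G.neighborFinset v = G.neighborFinset w := by
  have hunion := h.card_neighborFinset_union_of_not_adj hne hna
  have hdeg (u : V) : #(G.neighborFinset u) = k := by
    rw [card_neighborFinset_eq_degree, h.regular.degree_eq]
  have hv : G.neighborFinset v = G.neighborFinset v ∪ G.neighborFinset w :=
    eq_of_subset_of_card_le subset_union_left (by rw [hunion, hdeg]; omega)
  have hw : G.neighborFinset w = G.neighborFinset v ∪ G.neighborFinset w :=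
    eq_of_subset_of_card_le subset_union_right (by rw [hunion, hdeg]; omega)
  exact hv.trans hw.symm

theorem IsSRGWith.eq_bot_of_connected_compl (h : G.IsSRGWith n k e k) (hGc : Gᶜ.Connected) :
    G = ⊥ := by
  classical
  by_contra hne
  obtain ⟨x, a, b, hxa, hab, hxb, hxb'⟩ :=
    hGc.exists_adj_adj_not_adj_ne (compl_eq_top.not.2 hne)
  rw [compl_adj] at hxa hab hxb
  have hN : G.neighborFinset x = G.neighborFinset b :=
    (h.neighborFinset_eq_of_not_adj hxa.1 hxa.2).trans (h.neighborFinset_eq_of_not_adj hab.1 hab.2)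
  have hb : b ∈ G.neighborFinset x := by simpa [hxb'] using hxb
  simp [hN] at hb

theorem IsSRGWith.pos_and_lt_of_connected [Nontrivial V] (h : G.IsSRGWith n k e d)
    (hG : G.Connected) (hGc : Gᶜ.Connected) : 0 < d ∧ d < k := by
  have hGtop := ne_top_of_connected_compl hGc
  obtain ⟨v, w, hvw, hna⟩ := ne_top_iff_exists_not_adj.1 hGtop
  refine ⟨Nat.pos_of_ne_zero ?_, lt_of_le_of_ne ?_ ?_⟩
  · rintro rfl
    exact hGtop (h.eq_top_of_connected hG)
  · classical
    rw [← h.of_not_adj hvw hna, ← h.regular.degree_eq v]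
    exact card_commonNeighbors_le_degree_left G v w
  · rintro rfl
    exact not_connected_bot (h.eq_bot_of_connected_compl hGc ▸ hG)

theorem IsSRGWith.two_mul_sub_add_two_le [DecidableEq V] (h : G.IsSRGWith n k e d)
    (hG : G ≠ ⊤) : 2 * k - d + 2 ≤ n := by
  obtain ⟨v, w, hne, hna⟩ := ne_top_iff_exists_not_adj.1 hG
  have hna' : ¬G.Adj w v := fun h' ↦ hna h'.symm
  have hw : w ∉ G.neighborFinset v ∪ G.neighborFinset w := by simp [hna]
  have hv : v ∉ insert w (G.neighborFinset v ∪ G.neighborFinset w) := by simp [hne, hna']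
  have := card_le_univ (insert v (insert w (G.neighborFinset v ∪ G.neighborFinset w)))
  rwa [card_insert_of_notMem hv, card_insert_of_notMem hw,
    h.card_neighborFinset_union_of_not_adj hne hna, h.card] at this

theorem IsRegularOfDegree.lt_card [Nonempty V] (hG : G.IsRegularOfDegree k) :
    k < Fintype.card V :=
  hG.degree_eq (Classical.arbitrary V) ▸ G.degree_lt_card_verts _

theorem energy_eq_sum_abs_eigenvalues [DecidableEq V] :
    energy G = ∑ i, |(adjMatrix_isHermitian G).eigenvalues i| := by
  unfold energy adjEig
  congr!

theorem IsRegularOfDegree.adjMatrix_mul_of_one {α : Type*} [NonAssocSemiring α]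
    (hG : G.IsRegularOfDegree k) :
    G.adjMatrix α * Matrix.of 1 = (k : α) • Matrix.of 1 := by
  ext i j
  simp [adjMatrix_mul_apply, hG.degree_eq]

theorem IsSRGWith.adjMatrix_sq_eq {α : Type*} [CommRing α] [DecidableEq V]
    (h : G.IsSRGWith n k e d) :
    G.adjMatrix α ^ 2 =
      ((e : α) - d) • G.adjMatrix α + ((k : α) - d) • 1 + (d : α) • Matrix.of 1 := by
  have hC : Gᶜ.adjMatrix α = Matrix.of 1 - 1 - G.adjMatrix α := by
    classical
    rw [← compl_adjMatrix_eq_adjMatrix_compl (G := G) α,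
      ← one_add_adjMatrix_add_compl_adjMatrix_eq_of_one (G := G) (α := α)]
    abel
  rw [h.matrix_eq, hC, ← Nat.cast_smul_eq_nsmul α k, ← Nat.cast_smul_eq_nsmul α e,
    ← Nat.cast_smul_eq_nsmul α d]
  module

theorem IsSRGWith.aeval_adjMatrix_eq_zero [DecidableEq V]
    (h : G.IsSRGWith n k e d) {r s : ℝ} (hsum : r + s = e - d) (hprod : r * s = d - k) :
    aeval (G.adjMatrix ℝ) ((X - C (k : ℝ)) * (X - C r) * (X - C s)) = 0 := by
  set A := G.adjMatrix ℝ
  have hquad : (A - r • 1) * (A - s • 1) = (d : ℝ) • Matrix.of 1 := by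
    calc (A - r • 1) * (A - s • 1) = A ^ 2 - (r + s) • A + (r * s) • 1 := by
          simp only [sub_mul, mul_sub, smul_mul_assoc, mul_smul_comm, one_mul, mul_one, sq]
          module
      _ = (d : ℝ) • Matrix.of 1 := by rw [h.adjMatrix_sq_eq, hsum, hprod]; module
  simp only [map_mul, map_sub, aeval_X, aeval_C, Algebra.algebraMap_eq_smul_one]
  rw [mul_assoc, hquad, mul_smul_comm, sub_mul, h.regular.adjMatrix_mul_of_one, smul_mul_assoc,
    one_mul, sub_self, smul_zero]

theorem IsSRGWith.eigenvalues_eq_or [DecidableEq V]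
    (h : G.IsSRGWith n k e d) {r s : ℝ} (hsum : r + s = e - d) (hprod : r * s = d - k) (i : V) :
    (adjMatrix_isHermitian G).eigenvalues i = k ∨ (adjMatrix_isHermitian G).eigenvalues i = r ∨
      (adjMatrix_isHermitian G).eigenvalues i = s := by
  simpa [sub_eq_zero, or_assoc] using
    (adjMatrix_isHermitian G).eval_eigenvalues_eq_zero_of_aeval_eq_zero
      (h.aeval_adjMatrix_eq_zero hsum hprod) i

theorem IsSRGWith.energy_mul_eq [DecidableEq V]
    (h : G.IsSRGWith n k e d) {r s : ℝ} (hsum : r + s = e - d) (hprod : r * s = d - k)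
    (hr : 0 ≤ r) (hs : s < 0) :
    energy G * ((k - s) * (r - s)) = 2 * n * k * (1 + r) * -s := by
  set μ := (adjMatrix_isHermitian G).eigenvalues
  -- `|x| - x` and `-2 s (x - k)(x - r) / ((k - s)(r - s))` agree on `{k, r, s}`
  have habs : ∀ i, |μ i| * ((k - s) * (r - s)) =
      μ i * ((k - s) * (r - s)) - 2 * s * (μ i ^ 2 - (k + r) * μ i + k * r) := by
    intro i
    rcases h.eigenvalues_eq_or hsum hprod i with hi | hi | hi <;> simp only [μ, hi]
    · rw [abs_of_nonneg k.cast_nonneg]; ring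
    · rw [abs_of_nonneg hr]; ring
    · rw [abs_of_neg hs]; ring
  have htrace : ∑ i, μ i = 0 := by
    simpa [trace_adjMatrix] using
      ((adjMatrix_isHermitian G).trace_pow_eq_sum_eigenvalues_pow 1).symm
  have htrace_sq : ∑ i, μ i ^ 2 = n * k := by
    have htrace_adj_sq : (G.adjMatrix ℝ ^ 2).trace = n * k := by
      simp only [Matrix.trace, Matrix.diag, sq, adjMatrix_mul_self_apply_self, h.regular.degree_eq,
        sum_const, card_univ, h.card, nsmul_eq_mul]
    simpa [htrace_adj_sq] using ((adjMatrix_isHermitian G).trace_pow_eq_sum_eigenvalues_pow 2).symm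
  rw [energy_eq_sum_abs_eigenvalues, sum_mul, sum_congr rfl fun i _ ↦ habs i, sum_sub_distrib,
    ← sum_mul, ← mul_sum, sum_add_distrib, sum_sub_distrib, ← mul_sum, htrace, htrace_sq]
  simp [h.card]
  ring

theorem IsSRGWith.energy_compl_mul_eq [DecidableEq V] [Nontrivial V] (h : G.IsSRGWith n k e d)
    (hG : G.Connected) (hGc : Gᶜ.Connected) {r s : ℝ} (hsum : r + s = e - d)
    (hprod : r * s = d - k) (hr : 0 ≤ r) :
    energy Gᶜ * ((n - k + r) * (r - s)) = 2 * n * (n - k - 1) * (1 + r) * -s := by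
  have hbounds := h.pos_and_lt_of_connected hG hGc
  have hbounds_compl := h.compl.pos_and_lt_of_connected hGc (by rwa [compl_compl])
  have hn := h.two_mul_sub_add_two_le (ne_top_of_connected_compl hGc)
  have hk' : ((n - k - 1 : ℕ) : ℝ) = n - k - 1 := by
    rw [Nat.cast_sub (by omega), Nat.cast_sub (by omega)]; push_cast; ring
  have he' : ((n - (2 * k - d) - 2 : ℕ) : ℝ) = n - 2 * k + d - 2 := by
    rw [Nat.cast_sub (by omega), Nat.cast_sub (by omega), Nat.cast_sub (by omega)]; push_cast; ring
  have hd' : ((n - (2 * k - e) : ℕ) : ℝ) = n - 2 * k + e := by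
    rw [Nat.cast_sub (by omega), Nat.cast_sub (by omega)]; push_cast; ring
  have hek : (e : ℝ) + 1 < k := by exact_mod_cast (by omega : e + 1 < k)
  have hs : s < -1 := by nlinarith
  have := h.compl.energy_mul_eq (r := -1 - s) (s := -1 - r) (by rw [he', hd']; linarith)
    (by rw [hd', hk']; linear_combination hsum + hprod) (by linarith) (by linarith)
  rw [hk'] at this
  linear_combination this

theorem IsSRGWith.energy_eq_energy_compl_iff [DecidableEq V] [Nontrivial V]
    (h : G.IsSRGWith n k e d) (hG : G.Connected) (hGc : Gᶜ.Connected) {r s : ℝ}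
    (hsum : r + s = e - d) (hprod : r * s = d - k) (hr : 0 ≤ r) (hs : s < 0) :
    energy G = energy Gᶜ ↔ (k : ℝ) * (n - k + r) = (n - k - 1) * (k - s) := by
  have hkn : (k : ℝ) < n := by exact_mod_cast h.card ▸ h.regular.lt_card
  have hden : ((k : ℝ) - s) * (n - k + r) * (r - s) ≠ 0 :=
    (mul_pos (mul_pos (by linarith) (by linarith)) (by linarith)).ne'
  have hC : 2 * n * (1 + r) * -s ≠ 0 :=
    (mul_pos (mul_pos (by linarith [k.cast_nonneg (α := ℝ)]) (by linarith)) (by linarith)).ne'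
  have hE : energy G * (((k : ℝ) - s) * (n - k + r) * (r - s)) =
      2 * n * (1 + r) * -s * (k * (n - k + r)) := by
    linear_combination (n - k + r : ℝ) * h.energy_mul_eq hsum hprod hr hs
  have hEc : energy Gᶜ * (((k : ℝ) - s) * (n - k + r) * (r - s)) =
      2 * n * (1 + r) * -s * ((n - k - 1) * (k - s)) := by
    linear_combination (k - s : ℝ) * h.energy_compl_mul_eq hG hGc hsum hprod hr
  rw [← mul_left_inj' hden, hE, hEc, mul_right_inj' hC]

end SimpleGraph

/-- A primitive strongly regular graph `srg(n,k,e,d)` is equienergetic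
with its complement iff `n = 2k(√α + 1)/(√α - (e - d)) + 1`, where
`α = (e-d)² + 4(k-d)`. -/
theorem srg_equienergetic_iff {V : Type*} [Fintype V] [DecidableEq V]
    (G : SimpleGraph V) [DecidableRel G.Adj] (n k e d : ℕ)
    (h : G.IsSRGWith n k e d) (hG : G.Connected) (hGc : Gᶜ.Connected) :
    energy G = energy Gᶜ ↔
      (n : ℝ) = 2 * (k : ℝ) *
          (Real.sqrt (((e : ℝ) - (d : ℝ)) ^ 2 + 4 * ((k : ℝ) - (d : ℝ))) + 1) /
          (Real.sqrt (((e : ℝ) - (d : ℝ)) ^ 2 + 4 * ((k : ℝ) - (d : ℝ))) -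
            ((e : ℝ) - (d : ℝ))) + 1 := by
  rcases subsingleton_or_nontrivial V with hV | hV
  · have : Nonempty V := hG.nonempty
    have hn : n = 1 := h.card ▸ le_antisymm (Fintype.card_le_one_iff_subsingleton.2 hV)
      Fintype.card_pos
    have hk : k = 0 := by have := h.card ▸ h.regular.lt_card; omega
    have hGc_eq : Gᶜ = G := by ext u v; simp [Subsingleton.elim u v]
    simp [hGc_eq, hn, hk]
  obtain ⟨hd, hdk⟩ := h.pos_and_lt_of_connected hG hGc
  obtain ⟨r, s, hsum, hprod, hδ, hr, hs⟩ :=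
    exists_pos_neg_roots ((e : ℝ) - d) (sub_pos.2 (Nat.cast_lt.2 hdk : (d : ℝ) < k))
  rw [hδ, ← hsum, h.energy_eq_energy_compl_iff hG hGc hsum (by rw [hprod, neg_sub]) hr.le hs,
    div_add_one (by linarith), eq_div_iff (by linarith)]
  constructor <;> intro H
  · linear_combination (-2 : ℝ) * H
  · linear_combination (-1 / 2 : ℝ) * H
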